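/- Let A ∈ ℝ^{m×n} and suppose the columns of A are partitioned into disjoint sets V_1,...,V_k (viewed as submatrices). Let C = [C_1 ... C_k] where each C_i consists of columns selected from V_i, and suppose C has full column rank r. Then ‖(I - CC⁺)A‖_F² ≤ k · max_i ‖(I - C_i C_i⁺)V_i‖_F², where C⁺ denotes the Moore–Penrose pseudoinverse. -/
import Mathlib
open Matrix

noncomputable def frob {m n : Type*} [Fintype m] [Fintype n] (A : Matrix m n ℝ) : ℝ :=
  Real.sqrt (∑ i, ∑ j, (A i j) ^ 2)

noncomputable def pinvL {m k : Type*} [Fintype m] [Fintype k] [DecidableEq k]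
    (C : Matrix m k ℝ) : Matrix k m ℝ := (Cᵀ * C)⁻¹ * Cᵀ

noncomputable def colsOf {m n k : ℕ} (A : Matrix (Fin m) (Fin n) ℝ)
    (part : Fin n → Fin k) (i : Fin k) : Matrix (Fin m) {j : Fin n // part j = i} ℝ :=
  A.submatrix id Subtype.val

noncomputable def selOf {m n r k : ℕ} (A : Matrix (Fin m) (Fin n) ℝ)
    (part : Fin n → Fin k) (s : Fin r → Fin n) (i : Fin k) :
    Matrix (Fin m) {j : Fin r // part (s j) = i} ℝ :=
  A.submatrix id fun j => s j.1

lemma frob_sq {m n : Type*} [Fintype m] [Fintype n] (A : Matrix m n ℝ) :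
    frob A ^ 2 = ∑ i, ∑ j, (A i j) ^ 2 :=
  Real.sq_sqrt (Finset.sum_nonneg fun _ _ => Finset.sum_nonneg fun _ _ => sq_nonneg _)

section aux
set_option linter.unusedSectionVars false
variable {μ ρ : Type*} [Fintype μ] [Fintype ρ] [DecidableEq ρ] [DecidableEq μ]

lemma aux_isUnit (C : Matrix μ ρ ℝ) (h : LinearIndependent ℝ Cᵀ) :
    IsUnit (Cᵀ * C).det := by
  have h1 : Function.Injective C.mulVec := Matrix.mulVec_injective_iff.mpr h
  have hk : LinearMap.ker (Cᵀ * C).mulVecLin = ⊥ := by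
    rw [Matrix.ker_mulVecLin_transpose_mul_self]
    exact LinearMap.ker_eq_bot.mpr h1
  have h2 : Function.Injective (Cᵀ * C).mulVec := LinearMap.ker_eq_bot.mp hk
  exact (Matrix.isUnit_iff_isUnit_det _).mp (Matrix.mulVec_injective_iff_isUnit.mp h2)

lemma aux_annih (C : Matrix μ ρ ℝ) (hd : IsUnit (Cᵀ * C).det) :
    Cᵀ * (1 - C * pinvL C) = 0 := by
  have h : Cᵀ * (C * pinvL C) = Cᵀ := by
    rw [pinvL, ← Matrix.mul_assoc, ← Matrix.mul_assoc, Matrix.mul_nonsing_inv _ hd,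
      Matrix.one_mul]
  rw [Matrix.mul_sub, Matrix.mul_one, h, sub_self]

lemma aux_col (C : Matrix μ ρ ℝ) (hd : IsUnit (Cᵀ * C).det) (x : μ → ℝ) (w : ρ → ℝ) :
    ∑ a, (((1 - C * pinvL C) *ᵥ x) a) ^ 2 ≤ ∑ a, (x a - (C *ᵥ w) a) ^ 2 := by
  set u := (1 - C * pinvL C) *ᵥ x with hu_def
  set t := pinvL C *ᵥ x - w with ht_def
  have hu : Cᵀ *ᵥ u = 0 := by
    rw [hu_def, Matrix.mulVec_mulVec, aux_annih C hd, Matrix.zero_mulVec]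
  have hdecomp : ∀ a, x a - (C *ᵥ w) a = u a + (C *ᵥ t) a := by
    intro a
    simp only [hu_def, ht_def, Matrix.sub_mulVec, Matrix.one_mulVec, Matrix.mulVec_sub,
      Matrix.mulVec_mulVec, Pi.sub_apply]
    ring
  have hcross : ∑ a, u a * (C *ᵥ t) a = 0 := by
    have h0 : u ⬝ᵥ (C *ᵥ t) = 0 := by
      rw [Matrix.dotProduct_mulVec, ← Matrix.mulVec_transpose, hu, zero_dotProduct]
    simpa [dotProduct] using h0
  have key : ∑ a, (x a - (C *ᵥ w) a) ^ 2 = ∑ a, u a ^ 2 + ∑ a, ((C *ᵥ t) a) ^ 2 := by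
    calc ∑ a, (x a - (C *ᵥ w) a) ^ 2
        = ∑ a, (u a ^ 2 + ((C *ᵥ t) a) ^ 2 + 2 * (u a * (C *ᵥ t) a)) := by
          refine Finset.sum_congr rfl fun a _ => ?_
          rw [hdecomp a]; ring
      _ = ∑ a, u a ^ 2 + ∑ a, ((C *ᵥ t) a) ^ 2 + 2 * ∑ a, u a * (C *ᵥ t) a := by
          rw [Finset.sum_add_distrib, Finset.sum_add_distrib, Finset.mul_sum]
      _ = _ := by rw [hcross]; ring
  rw [key]
  have hnn : 0 ≤ ∑ a, ((C *ᵥ t) a) ^ 2 := Finset.sum_nonneg fun a _ => sq_nonneg _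
  linarith

lemma aux_extend (C : Matrix μ ρ ℝ) (p : ρ → Prop) [DecidablePred p] (w0 : Subtype p → ℝ) :
    C *ᵥ (fun j => if h : p j then w0 ⟨j, h⟩ else 0)
      = (C.submatrix id (Subtype.val : Subtype p → ρ)) *ᵥ w0 := by
  ext a
  show ∑ j, (C a j * if h : p j then w0 ⟨j, h⟩ else 0)
      = ∑ j : Subtype p, C a j.val * w0 j
  have h1 : ∑ j ∈ Finset.univ.filter p, (C a j * if h : p j then w0 ⟨j, h⟩ else 0)
      = ∑ j, (C a j * if h : p j then w0 ⟨j, h⟩ else 0) := by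
    refine Finset.sum_filter_of_ne fun x _ hx => ?_
    by_contra hp
    exact hx (by simp [dif_neg hp])
  have h2 : ∑ j ∈ Finset.univ.filter p, (C a j * if h : p j then w0 ⟨j, h⟩ else 0)
      = ∑ j : Subtype p, (C a j.val * if h : p j.val then w0 ⟨j.val, h⟩ else 0) :=
    Finset.sum_subtype _ (fun j => by simp) _
  rw [← h1, h2]
  exact Finset.sum_congr rfl fun j _ => by rw [dif_pos j.2]

lemma aux_li (C : Matrix μ ρ ℝ) (hfull : LinearIndependent ℝ Cᵀ) (p : ρ → Prop) :
    LinearIndependent ℝ (C.submatrix id (Subtype.val : Subtype p → ρ))ᵀ := by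
  have h : (C.submatrix id (Subtype.val : Subtype p → ρ))ᵀ
      = fun j : Subtype p => Cᵀ j.val := by
    ext j a; simp [Matrix.transpose_apply]
  rw [h]
  exact hfull.comp Subtype.val Subtype.val_injective

end aux

/-- partitioned column selection error bound
    ‖(I - CC⁺)A‖_F² ≤ k · max_i ‖(I - C_iC_i⁺)V_i‖_F². -/
theorem stmt1 {m n k r : ℕ} (hk : 0 < k)
    (A : Matrix (Fin m) (Fin n) ℝ) (part : Fin n → Fin k)
    (s : Fin r → Fin n) (hs : Function.Injective s)
    (C : Matrix (Fin m) (Fin r) ℝ) (hC : C = A.submatrix id s)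
    (hfull : LinearIndependent ℝ Cᵀ) :
    frob ((1 - C * pinvL C) * A) ^ 2 ≤
      (k : ℝ) *
        Finset.univ.sup' (Finset.univ_nonempty_iff.mpr (Fin.pos_iff_nonempty.mp hk))
          (fun i =>
            frob ((1 - selOf A part s i * pinvL (selOf A part s i)) * colsOf A part i) ^ 2) := by
  classical
  have hd : IsUnit (Cᵀ * C).det := aux_isUnit C hfull
  set F : Fin k → ℝ := fun i =>
    frob ((1 - selOf A part s i * pinvL (selOf A part s i)) * colsOf A part i) ^ 2 with hF
  have hentry : ∀ (j : Fin n) (a : Fin m),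
      ((1 - C * pinvL C) * A : Matrix (Fin m) (Fin n) ℝ) a j
      = ((1 - C * pinvL C) *ᵥ fun b => A b j) a := fun j a => by
    simp [Matrix.mul_apply, Matrix.mulVec, dotProduct]
  have step1 : frob ((1 - C * pinvL C) * A) ^ 2
      = ∑ j : Fin n, ∑ a, (((1 - C * pinvL C) *ᵥ fun b => A b j) a) ^ 2 := by
    rw [frob_sq, Finset.sum_comm]
    exact Finset.sum_congr rfl fun j _ => Finset.sum_congr rfl fun a _ => by rw [hentry]
  have step2 : ∑ j : Fin n, ∑ a, (((1 - C * pinvL C) *ᵥ fun b => A b j) a) ^ 2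
      = ∑ i : Fin k, ∑ j : {j : Fin n // part j = i},
          ∑ a, (((1 - C * pinvL C) *ᵥ fun b => A b j.val) a) ^ 2 :=
    (Fintype.sum_fiberwise part _).symm
  have step3 : ∀ i : Fin k,
      (∑ j : {j : Fin n // part j = i},
        ∑ a, (((1 - C * pinvL C) *ᵥ fun b => A b j.val) a) ^ 2) ≤ F i := by
    intro i
    set Ci := selOf A part s i with hCi
    have hCisub : Ci
        = C.submatrix id (Subtype.val : {j : Fin r // part (s j) = i} → Fin r) := by
      ext a j; simp [hCi, selOf, hC]
    have hdi : IsUnit (Ciᵀ * Ci).det := by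
      rw [hCisub]; exact aux_isUnit _ (aux_li C hfull _)
    have hFi : F i = ∑ j : {j : Fin n // part j = i},
        ∑ a, (((1 - Ci * pinvL Ci) *ᵥ fun b => A b j.val) a) ^ 2 := by
      rw [hF]
      simp only
      rw [← hCi, frob_sq, Finset.sum_comm]
      exact Finset.sum_congr rfl fun j _ => Finset.sum_congr rfl fun a _ => by
        simp [Matrix.mul_apply, Matrix.mulVec, dotProduct, colsOf]
    rw [hFi]
    refine Finset.sum_le_sum fun j _ => ?_
    set x : Fin m → ℝ := fun b => A b j.val with hx
    set w0 : {jj : Fin r // part (s jj) = i} → ℝ := pinvL Ci *ᵥ x with hw0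
    set w : Fin r → ℝ := fun jj => if h : part (s jj) = i then w0 ⟨jj, h⟩ else 0 with hw
    have hCw : C *ᵥ w = Ci *ᵥ w0 := by
      rw [hw, aux_extend C (fun jj => part (s jj) = i) w0, ← hCisub]
    have hcol := aux_col C hd x w
    rw [hCw] at hcol
    refine le_trans hcol (le_of_eq ?_)
    refine Finset.sum_congr rfl fun a _ => ?_
    simp [Matrix.sub_mulVec, Matrix.one_mulVec, Matrix.mulVec_mulVec, hw0]
  rw [step1, step2]
  calc ∑ i : Fin k, ∑ j : {j : Fin n // part j = i},
        ∑ a, (((1 - C * pinvL C) *ᵥ fun b => A b j.val) a) ^ 2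
      ≤ ∑ i : Fin k, F i := Finset.sum_le_sum fun i _ => step3 i
    _ ≤ ∑ _i : Fin k, Finset.univ.sup'
          (Finset.univ_nonempty_iff.mpr (Fin.pos_iff_nonempty.mp hk)) F :=
        Finset.sum_le_sum fun i _ => Finset.le_sup' F (Finset.mem_univ i)
    _ = (k : ℝ) * Finset.univ.sup'
          (Finset.univ_nonempty_iff.mpr (Fin.pos_iff_nonempty.mp hk)) F := by
        rw [Finset.sum_const, Finset.card_univ, Fintype.card_fin, nsmul_eq_mul]
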